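/- For any positive integers j and d, any (j+3, j+d)-configuration in a 4-cycle system contains a (j+3, j)-configuration as a substructure; that is, any set of j+d pairwise edge-disjoint 4-cycles whose union contains exactly j+3 vertices has a subset of j of its 4-cycles whose union still contains exactly j+3 vertices. -/

import Mathlib

open Finset

/-- The edge set of the 4-cycle `(a, b, c, d)`: edges {a,b}, {b,c}, {c,d}, {d,a}. -/
def cycEdges {V : Type*} [DecidableEq V] (a b c d : V) : Finset (Sym2 V) :=
  {s(a, b), s(b, c), s(c, d), s(d, a)}

/-- `E` is the edge set of a 4-cycle on four distinct vertices. -/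
def IsFourCycle {V : Type*} [DecidableEq V] (E : Finset (Sym2 V)) : Prop :=
  ∃ a b c d : V, ([a, b, c, d] : List V).Nodup ∧ E = cycEdges a b c d

/-- The set of vertices covered by a set of edges. -/
def edgeVerts {V : Type*} [DecidableEq V] (E : Finset (Sym2 V)) : Finset V :=
  E.sup (Sym2.lift ⟨fun x y => ({x, y} : Finset V), fun x y => Finset.pair_comm x y⟩)

/-- A `(k, l)`-configuration: a set of `l` pairwise edge-disjoint 4-cycles whose
union contains exactly `k` vertices. -/
def IsConfiguration {V : Type*} [DecidableEq V] (k l : ℕ)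
    (D : Finset (Finset (Sym2 V))) : Prop :=
  D.card = l ∧ (∀ E ∈ D, IsFourCycle E) ∧
    (∀ E ∈ D, ∀ F ∈ D, E ≠ F → Disjoint E F) ∧
    (D.sup edgeVerts).card = k

/-- `C` is a 4-cycle system: a collection of 4-cycles whose edge sets partition
the edge set of the complete graph on `V`. -/
def IsFourCycleSystem {V : Type*} [DecidableEq V] (C : Finset (Finset (Sym2 V))) : Prop :=
  (∀ E ∈ C, IsFourCycle E) ∧ ∀ e : Sym2 V, ¬ e.IsDiag → ∃! E, E ∈ C ∧ e ∈ E

/-- `C` is a 4-cycle packing: a set of pairwise edge-disjoint 4-cycles. -/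
def IsFourCyclePacking {V : Type*} [DecidableEq V] (C : Finset (Finset (Sym2 V))) : Prop :=
  (∀ E ∈ C, IsFourCycle E) ∧ ∀ E ∈ C, ∀ F ∈ C, E ≠ F → Disjoint E F

/-- `C` is `r`-sparse: it contains no `(j+3, j)`-configuration for `2 ≤ j ≤ r`. -/
def RSparse {V : Type*} [DecidableEq V] (r : ℕ) (C : Finset (Finset (Sym2 V))) : Prop :=
  ∀ j, 2 ≤ j → j ≤ r → ∀ D ⊆ C, ¬ IsConfiguration (j + 3) j D

/-- Two 4-cycles form a double-diamond: they are `(a,b,c,d)` and `(a,e,c,f)`,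
sharing the diagonal {a,c}. -/
def IsDoubleDiamond {V : Type*} [DecidableEq V] (E F : Finset (Sym2 V)) : Prop :=
  ∃ a b c d e f : V, ([a, b, c, d, e, f] : List V).Nodup ∧
    E = cycEdges a b c d ∧ F = cycEdges a e c f

/-- `C` is D-avoiding: no two of its 4-cycles form a double-diamond. -/
def DAvoiding {V : Type*} [DecidableEq V] (C : Finset (Finset (Sym2 V))) : Prop :=
  ∀ E ∈ C, ∀ F ∈ C, ¬ IsDoubleDiamond E F

/-- `C` is strictly `r`-sparse: `r`-sparse and D-avoiding. -/
def StrictlyRSparse {V : Type*} [DecidableEq V] (r : ℕ)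
    (C : Finset (Finset (Sym2 V))) : Prop :=
  RSparse r C ∧ DAvoiding C

/-!
Shrink the configuration to an inclusion-minimal subfamily `S` covering the same `j + 3`
vertices. By minimality every cycle of `S` has a private vertex, covered by no other cycle
of `S`. Fixing one cycle `E₀ ∈ S`, its four vertices and the private vertices of the other
cycles are pairwise distinct, so `4 + (|S| - 1) ≤ j + 3`, i.e. `|S| ≤ j`. Any `j` cycles of
the configuration containing `S` then still cover exactly the `j + 3` vertices.
-/

section PrivateElements

variable {ι α : Type*} [DecidableEq ι] [DecidableEq α]

lemma exists_subset_sup_eq_forall_exists_notMem_sup_erase (A : Finset ι) (f : ι → Finset α) :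
    ∃ S ⊆ A, S.sup f = A.sup f ∧ ∀ E ∈ S, ∃ v ∈ f E, v ∉ (S.erase E).sup f := by
  induction A using Finset.strongInduction with
  | H A ih =>
    by_cases hpriv : ∀ E ∈ A, ∃ v ∈ f E, v ∉ (A.erase E).sup f
    · exact ⟨A, Subset.rfl, rfl, hpriv⟩
    push Not at hpriv
    obtain ⟨E, hE, hcov⟩ := hpriv
    have hsup : (A.erase E).sup f = A.sup f := by
      rw [← insert_erase hE, sup_insert, erase_insert (notMem_erase E A)]
      exact (sup_eq_right.mpr hcov).symm
    obtain ⟨S, hS, hSsup, hSpriv⟩ := ih (A.erase E) (erase_ssubset hE)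
    exact ⟨S, hS.trans (erase_subset E A), hSsup.trans hsup, hSpriv⟩

lemma card_add_card_erase_le_card_sup {S : Finset ι} {f : ι → Finset α}
    (hpriv : ∀ E ∈ S, ∃ v ∈ f E, v ∉ (S.erase E).sup f) {E₀ : ι} (hE₀ : E₀ ∈ S) :
    #(f E₀) + #(S.erase E₀) ≤ #(S.sup f) := by
  have : Nonempty α := let ⟨v, _⟩ := hpriv E₀ hE₀; ⟨v⟩
  choose! v hvE hvpriv using hpriv
  have hcov : ∀ E ∈ S, ∀ F ∈ S, E ≠ F → f E ⊆ (S.erase F).sup f :=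
    fun E hE F _ hEF => le_sup (mem_erase.mpr ⟨hEF, hE⟩)
  have hmaps : Set.MapsTo v (S.erase E₀ : Set ι) ((S.sup f \ f E₀ : Finset α) : Set α) := by
    intro E hE
    obtain ⟨hEE₀, hES⟩ := mem_erase.mp hE
    exact mem_sdiff.mpr ⟨le_sup (f := f) hES (hvE E hES),
      fun h => hvpriv E hES (hcov E₀ hE₀ E hES (Ne.symm hEE₀) h)⟩
  have hinj : Set.InjOn v (S.erase E₀ : Set ι) := by
    intro E hE F hF hvEF
    have hES := mem_of_mem_erase hE
    have hFS := mem_of_mem_erase hF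
    by_contra hEF
    exact hvpriv F hFS (hvEF ▸ hcov E hES F hFS hEF (hvE E hES))
  have := card_le_card_of_injOn v hmaps hinj
  rw [card_sdiff_of_subset (le_sup (f := f) hE₀)] at this
  have := card_le_card (le_sup (f := f) hE₀)
  omega

end PrivateElements

lemma edgeVerts_cycEdges {V : Type*} [DecidableEq V] (a b c d : V) :
    edgeVerts (cycEdges a b c d) = {a, b, c, d} := by
  ext v
  simp only [edgeVerts, cycEdges, mem_sup, mem_insert, mem_singleton]
  constructor
  · rintro ⟨e, (rfl | rfl | rfl | rfl), hv⟩ <;>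
      simp only [Sym2.lift_mk, mem_insert, mem_singleton] at hv <;> tauto
  · rintro (rfl | rfl | rfl | rfl)
    · exact ⟨s(v, b), by simp⟩
    · exact ⟨s(a, v), by simp⟩
    · exact ⟨s(v, d), by simp⟩
    · exact ⟨s(v, a), by simp⟩

lemma card_edgeVerts_of_isFourCycle {V : Type*} [DecidableEq V] {E : Finset (Sym2 V)}
    (h : IsFourCycle E) : #(edgeVerts E) = 4 := by
  obtain ⟨a, b, c, d, hnd, rfl⟩ := h
  rw [edgeVerts_cycEdges, show ({a, b, c, d} : Finset V) = [a, b, c, d].toFinset by simp,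
    List.toFinset_card_of_nodup hnd]
  rfl

lemma IsConfiguration.of_subset {V : Type*} [DecidableEq V] {k l : ℕ}
    {A B : Finset (Finset (Sym2 V))} (hA : IsConfiguration k l A) (hBA : B ⊆ A)
    (hsup : B.sup edgeVerts = A.sup edgeVerts) : IsConfiguration k #B B := by
  obtain ⟨-, hfour, hdisj, hverts⟩ := hA
  exact ⟨rfl, fun E hE => hfour E (hBA hE),
    fun E hE F hF => hdisj E (hBA hE) F (hBA hF), hsup ▸ hverts⟩

theorem config_contains_subconfiguration_general {V : Type*} [DecidableEq V] (j d : ℕ)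
    (A : Finset (Finset (Sym2 V)))
    (hA : IsConfiguration (j + 3) (j + d) A) :
    ∃ B ⊆ A, IsConfiguration (j + 3) j B := by
  have hverts : #(A.sup edgeVerts) = j + 3 := hA.2.2.2
  obtain ⟨S, hSA, hSsup, hpriv⟩ :=
    exists_subset_sup_eq_forall_exists_notMem_sup_erase A edgeVerts
  obtain ⟨E₀, hE₀⟩ : S.Nonempty := by
    rw [nonempty_iff_ne_empty]
    rintro rfl
    simp [← hSsup] at hverts
  have hS : #S ≤ j := by
    have := card_add_card_erase_le_card_sup hpriv hE₀
    rw [card_edgeVerts_of_isFourCycle (hA.2.1 E₀ (hSA hE₀)), card_erase_of_mem hE₀, hSsup,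
      hverts] at this
    have := card_pos.mpr ⟨E₀, hE₀⟩
    omega
  obtain ⟨B, hSB, hBA, rfl⟩ := exists_subsuperset_card_eq hSA hS (hA.1 ▸ Nat.le_add_right j d)
  exact ⟨B, hBA, hA.of_subset hBA (le_antisymm (sup_mono hBA) (hSsup ▸ sup_mono hSB))⟩

/-- Any `(j+3, j+d)`-configuration contains a `(j+3, j)`-configuration. -/
theorem config_contains_subconfiguration {V : Type*} [DecidableEq V] (j d : ℕ)
    (hj : 0 < j) (hd : 0 < d) (A : Finset (Finset (Sym2 V)))
    (hA : IsConfiguration (j + 3) (j + d) A) :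
    ∃ B ⊆ A, IsConfiguration (j + 3) j B :=
  config_contains_subconfiguration_general j d A hA
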